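/- Let q ∈ C^∞(S¹, ℝ) and γ a curve with det(γ,γ_x)=1 and γ_{xx} = qγ. A function ξ ∈ C^∞(S¹,ℝ) satisfies (L₃)_q(ξ) = (1/4)(ξ_{xxx} - 4qξ_x - 2q_x ξ) = 0 if and only if the vector field ξ̃ = -(ξ_x/2)γ + ξγ_x equals A·γ for some constant matrix A ∈ sl(2,ℝ); consequently the kernel of (L₃)_q is at most 3-dimensional. -/

import Mathlib

open Real

/-- Determinant of the 2×2 matrix with columns `u`, `v`. -/
noncomputable def det2 (u v : Fin 2 → ℝ) : ℝ := u 0 * v 1 - u 1 * v 0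

/-- The third-order operator `(L₃)_q(v) = (1/4)(v_{xxx} - 4 q v_x - 2 q_x v)`. -/
noncomputable def L3 (q v : ℝ → ℝ) : ℝ → ℝ :=
  fun x => (1/4) * (deriv (deriv (deriv v)) x - 4 * q x * deriv v x - 2 * deriv q x * v x)

open scoped ContDiff in
private lemma cd_deriv {f : ℝ → ℝ} (hf : ContDiff ℝ ∞ f) : ContDiff ℝ ∞ (deriv f) :=
  (contDiff_infty_iff_deriv.mp hf).2

open scoped ContDiff in
private lemma hd {f : ℝ → ℝ} (hf : ContDiff ℝ ∞ f) (x : ℝ) : HasDerivAt f (deriv f x) x :=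
  (hf.differentiable (by simp) x).hasDerivAt

/-- derivative facts for the components of γ -/
private lemma component_facts (γ : ℝ → Fin 2 → ℝ) (q : ℝ → ℝ)
    (hγ : ContDiff ℝ (⊤ : ℕ∞) γ) (hcurv : ∀ x, deriv (deriv γ) x = q x • γ x) (i : Fin 2) :
    ContDiff ℝ (⊤ : ℕ∞) (fun y => γ y i) ∧ (∀ x, deriv (fun y => γ y i) x = deriv γ x i)
      ∧ ∀ x, deriv (deriv (fun y => γ y i)) x = q x * γ x i := by
  have hsm := contDiff_pi.mp hγ i
  have h1 : ∀ x, deriv (fun y => γ y i) x = deriv γ x i := fun x =>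
    (hasDerivAt_pi.1 ((hγ.differentiable (by simp) x).hasDerivAt) i).deriv
  refine ⟨hsm, h1, ?_⟩
  have hγ' : ContDiff ℝ (⊤ : ℕ∞) (deriv γ) := (contDiff_infty_iff_deriv.mp (hγ.of_le (by simp))).2
  intro x
  rw [funext h1]
  have := (hasDerivAt_pi.1 ((hγ'.differentiable (by simp) x).hasDerivAt) i).deriv
  rw [this, hcurv x, Pi.smul_apply, smul_eq_mul]

open scoped ContDiff in
/-- derivative facts for `V = -(ξ'/2) a + ξ a'` when `a'' = q a`. -/
private lemma tilde_derivs (q ξ a : ℝ → ℝ) (hq : ContDiff ℝ ∞ q) (hξ : ContDiff ℝ ∞ ξ)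
    (ha : ContDiff ℝ ∞ a) (ha'' : ∀ x, deriv (deriv a) x = q x * a x) :
    (∀ x, HasDerivAt (fun y => -(deriv ξ y) / 2 * a y + ξ y * deriv a y)
        ((ξ x * q x - deriv (deriv ξ) x / 2) * a x + deriv ξ x / 2 * deriv a x) x)
    ∧ (∀ x, HasDerivAt (fun y => (ξ y * q y - deriv (deriv ξ) y / 2) * a y + deriv ξ y / 2 * deriv a y)
        (q x * (-(deriv ξ x) / 2 * a x + ξ x * deriv a x) + (-2) * L3 q ξ x * a x) x) := by
  constructor
  · intro x
    have h := (((hd (cd_deriv hξ) x).neg.div_const 2).mul (hd ha x)).add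
      ((hd hξ x).mul (hd (cd_deriv ha) x))
    refine h.congr_deriv ?_
    rw [ha'' x]; simp only [Pi.neg_apply, Pi.sub_apply, Pi.mul_apply]; ring
  · intro x
    have h := ((((hd hξ x).mul (hd hq x)).sub ((hd (cd_deriv (cd_deriv hξ)) x).div_const 2)).mul
      (hd ha x)).add (((hd (cd_deriv hξ) x).div_const 2).mul (hd (cd_deriv ha) x))
    refine h.congr_deriv ?_
    rw [ha'' x]; simp only [L3, Pi.neg_apply, Pi.sub_apply, Pi.mul_apply]; ring
open scoped ContDiff in
private lemma forward_dir (γ : ℝ → Fin 2 → ℝ) (q ξ : ℝ → ℝ)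
    (hγ : ContDiff ℝ (⊤ : ℕ∞) γ) (hq : ContDiff ℝ (⊤ : ℕ∞) q) (hξ : ContDiff ℝ (⊤ : ℕ∞) ξ)
    (hdet : ∀ x, det2 (γ x) (deriv γ x) = 1)
    (hcurv : ∀ x, deriv (deriv γ) x = q x • γ x)
    (hL : ∀ x, L3 q ξ x = 0) :
    ∃ A : Matrix (Fin 2) (Fin 2) ℝ, A.trace = 0 ∧
      ∀ x, (-(deriv ξ x) / 2) • γ x + ξ x • deriv γ x = A.mulVec (γ x) := by
  have hq' : ContDiff ℝ ∞ q := hq.of_le (by simp)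
  have hξ' : ContDiff ℝ ∞ ξ := hξ.of_le (by simp)
  obtain ⟨ha, ha', ha''⟩ := component_facts γ q hγ hcurv 0
  obtain ⟨hc, hc', hc''⟩ := component_facts γ q hγ hcurv 1
  set a : ℝ → ℝ := fun y => γ y 0 with hadef
  set c : ℝ → ℝ := fun y => γ y 1 with hcdef
  have haI : ContDiff ℝ ∞ a := ha.of_le (by simp)
  have hcI : ContDiff ℝ ∞ c := hc.of_le (by simp)
  obtain ⟨hV0, hW0⟩ := tilde_derivs q ξ a hq' hξ' haI ha''
  obtain ⟨hV1, hW1⟩ := tilde_derivs q ξ c hq' hξ' hcI hc''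
  set V0 : ℝ → ℝ := fun y => -(deriv ξ y) / 2 * a y + ξ y * deriv a y with hV0def
  set W0 : ℝ → ℝ := fun y => (ξ y * q y - deriv (deriv ξ) y / 2) * a y + deriv ξ y / 2 * deriv a y with hW0def
  set V1 : ℝ → ℝ := fun y => -(deriv ξ y) / 2 * c y + ξ y * deriv c y with hV1def
  set W1 : ℝ → ℝ := fun y => (ξ y * q y - deriv (deriv ξ) y / 2) * c y + deriv ξ y / 2 * deriv c y with hW1def
  have hW : ∀ x, a x * deriv c x - c x * deriv a x = 1 := by
    intro x
    have h := hdet x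
    simp only [det2] at h
    rw [← hc' x, ← ha' x] at h
    exact h
  -- the four entry functions
  set E00 : ℝ → ℝ := fun x => V0 x * deriv c x - W0 x * c x with hE00
  set E01 : ℝ → ℝ := fun x => W0 x * a x - V0 x * deriv a x with hE01
  set E10 : ℝ → ℝ := fun x => V1 x * deriv c x - W1 x * c x with hE10
  set E11 : ℝ → ℝ := fun x => W1 x * a x - V1 x * deriv a x with hE11
  -- each entry function is constant
  have key : ∀ (V W b : ℝ → ℝ) (hbI : ContDiff ℝ ∞ b)
      (hb'' : ∀ x, deriv (deriv b) x = q x * b x)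
      (hV : ∀ x, HasDerivAt V (W x) x)
      (hWd : ∀ x, HasDerivAt W (q x * V x + (-2) * L3 q ξ x * b x) x),
      (∀ x y, (V x * deriv c x - W x * c x) = (V y * deriv c y - W y * c y)) ∧
      (∀ x y, (W x * a x - V x * deriv a x) = (W y * a y - V y * deriv a y)) := by
    intro V W b hbI hb'' hV hWd
    constructor
    · have hdiff : ∀ x, HasDerivAt (fun y => V y * deriv c y - W y * c y)
          (W x * deriv c x + V x * deriv (deriv c) x
            - ((q x * V x + (-2) * L3 q ξ x * b x) * c x + W x * deriv c x)) x := by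
        intro x
        exact ((hV x).mul (hd (cd_deriv hcI) x)).sub ((hWd x).mul (hd hcI x))
      apply is_const_of_deriv_eq_zero
      · exact fun x => ((hdiff x).differentiableAt)
      · intro x
        rw [(hdiff x).deriv, hc'' x, hL x]
        ring
    · have hdiff : ∀ x, HasDerivAt (fun y => W y * a y - V y * deriv a y)
          ((q x * V x + (-2) * L3 q ξ x * b x) * a x + W x * deriv a x
            - (W x * deriv a x + V x * deriv (deriv a) x)) x := by
        intro x
        exact ((hWd x).mul (hd haI x)).sub ((hV x).mul (hd (cd_deriv haI) x))
      apply is_const_of_deriv_eq_zero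
      · exact fun x => ((hdiff x).differentiableAt)
      · intro x
        rw [(hdiff x).deriv, ha'' x, hL x]
        ring
  obtain ⟨k00, k01⟩ := key V0 W0 a haI ha'' hV0 hW0
  obtain ⟨k10, k11⟩ := key V1 W1 c hcI hc'' hV1 hW1
  refine ⟨!![E00 0, E01 0; E10 0, E11 0], ?_, ?_⟩
  · rw [Matrix.trace_fin_two_of]
    simp only [hE00, hE11, hV0def, hW0def, hV1def, hW1def]
    ring
  · intro x
    have hWx := hW x
    have e1 : γ x 0 = a x := rfl
    have e2 : γ x 1 = c x := rfl
    have h0 : ((-(deriv ξ x) / 2) • γ x + ξ x • deriv γ x) 0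
        = E00 0 * γ x 0 + E01 0 * γ x 1 := by
      rw [Pi.add_apply, Pi.smul_apply, Pi.smul_apply, smul_eq_mul, smul_eq_mul]
      simp only [hE00, hE01]
      rw [k00 0 x, k01 0 x, e1, e2, ← ha' x]
      simp only [hV0def, hW0def]
      linear_combination (-(-(deriv ξ x) / 2 * a x + ξ x * deriv a x)) * hWx
    have h1 : ((-(deriv ξ x) / 2) • γ x + ξ x • deriv γ x) 1
        = E10 0 * γ x 0 + E11 0 * γ x 1 := by
      rw [Pi.add_apply, Pi.smul_apply, Pi.smul_apply, smul_eq_mul, smul_eq_mul]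
      simp only [hE10, hE11]
      rw [k10 0 x, k11 0 x, e1, e2, ← hc' x]
      simp only [hV1def, hW1def]
      linear_combination (-(-(deriv ξ x) / 2 * c x + ξ x * deriv c x)) * hWx
    funext i
    have hm : (!![E00 0, E01 0; E10 0, E11 0]).mulVec (γ x) i
        = (!![E00 0, E01 0; E10 0, E11 0]) i 0 * γ x 0 + (!![E00 0, E01 0; E10 0, E11 0]) i 1 * γ x 1 := by
      simp [Matrix.mulVec, dotProduct, Fin.sum_univ_two]
    rw [hm]
    fin_cases i
    · simpa using h0
    · simpa using h1
open scoped ContDiff in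
private lemma backward_dir (γ : ℝ → Fin 2 → ℝ) (q ξ : ℝ → ℝ)
    (hγ : ContDiff ℝ (⊤ : ℕ∞) γ) (hq : ContDiff ℝ (⊤ : ℕ∞) q) (hξ : ContDiff ℝ (⊤ : ℕ∞) ξ)
    (hne : ∀ x, γ x ≠ 0)
    (hcurv : ∀ x, deriv (deriv γ) x = q x • γ x)
    (A : Matrix (Fin 2) (Fin 2) ℝ)
    (hA : ∀ x, (-(deriv ξ x) / 2) • γ x + ξ x • deriv γ x = A.mulVec (γ x)) :
    ∀ x, L3 q ξ x = 0 := by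
  have hq' : ContDiff ℝ ∞ q := hq.of_le (by simp)
  have hξ' : ContDiff ℝ ∞ ξ := hξ.of_le (by simp)
  obtain ⟨ha, ha', ha''⟩ := component_facts γ q hγ hcurv 0
  obtain ⟨hc, hc', hc''⟩ := component_facts γ q hγ hcurv 1
  set a : ℝ → ℝ := fun y => γ y 0 with hadef
  set c : ℝ → ℝ := fun y => γ y 1 with hcdef
  have haI : ContDiff ℝ ∞ a := ha.of_le (by simp)
  have hcI : ContDiff ℝ ∞ c := hc.of_le (by simp)
  -- for each component i, `-2 * L3 q ξ x * γ x i = 0`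
  have key : ∀ b : ℝ → ℝ, ContDiff ℝ ∞ b → (∀ x, deriv (deriv b) x = q x * b x) →
      (∀ x, deriv b x = deriv γ x 0 ∨ ∀ x, deriv b x = deriv γ x 1) →
      True := fun _ _ _ _ => trivial
  have main : ∀ (i : Fin 2), ∀ x, (-2) * L3 q ξ x * γ x i = 0 := by
    intro i
    -- the component function and its derivative facts
    have hb : ContDiff ℝ ∞ (fun y => γ y i) := (contDiff_pi.mp hγ i).of_le (by simp)
    have hb' : ∀ x, deriv (fun y => γ y i) x = deriv γ x i :=
      (component_facts γ q hγ hcurv i).2.1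
    have hb'' : ∀ x, deriv (deriv (fun y => γ y i)) x = q x * γ x i :=
      (component_facts γ q hγ hcurv i).2.2
    obtain ⟨hV, hWd⟩ := tilde_derivs q ξ (fun y => γ y i) hq' hξ' hb hb''
    set V : ℝ → ℝ := fun y => -(deriv ξ y) / 2 * (fun y => γ y i) y + ξ y * deriv (fun y => γ y i) y with hVdef
    -- V equals the linear combination given by A
    have hVeq : V = fun y => A i 0 * γ y 0 + A i 1 * γ y 1 := by
      funext y
      have h := congrFun (hA y) i
      rw [Pi.add_apply, Pi.smul_apply, Pi.smul_apply, smul_eq_mul, smul_eq_mul] at h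
      have hm : A.mulVec (γ y) i = A i 0 * γ y 0 + A i 1 * γ y 1 := by
        simp [Matrix.mulVec, dotProduct, Fin.sum_univ_two]
      rw [hm] at h
      simp only [hVdef]
      rw [hb' y]
      exact h
    -- second derivative of V computed two ways
    have hcomb : ∀ x, HasDerivAt (fun y => A i 0 * γ y 0 + A i 1 * γ y 1)
        (A i 0 * deriv a x + A i 1 * deriv c x) x := by
      intro x
      exact ((hd haI x).const_mul (A i 0)).add ((hd hcI x).const_mul (A i 1))
    have hcomb2 : ∀ x, HasDerivAt (fun x => A i 0 * deriv a x + A i 1 * deriv c x)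
        (A i 0 * deriv (deriv a) x + A i 1 * deriv (deriv c) x) x := by
      intro x
      exact ((hd (cd_deriv haI) x).const_mul (A i 0)).add ((hd (cd_deriv hcI) x).const_mul (A i 1))
    intro x
    -- first way: via the tilde identity
    have hder1 : deriv V = fun x => (ξ x * q x - deriv (deriv ξ) x / 2) * (fun y => γ y i) x
        + deriv ξ x / 2 * deriv (fun y => γ y i) x := funext fun x => (hV x).deriv
    have eq1 : deriv (deriv V) x = q x * V x + (-2) * L3 q ξ x * γ x i := by
      rw [hder1, (hWd x).deriv]
    -- second way: via the combination
    have hder2 : deriv V = fun x => A i 0 * deriv a x + A i 1 * deriv c x := by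
      rw [hVeq]
      exact funext fun x => (hcomb x).deriv
    have eq2 : deriv (deriv V) x = q x * V x := by
      rw [hder2, (hcomb2 x).deriv, ha'' x, hc'' x, hVeq]
      ring
    have : (-2) * L3 q ξ x * γ x i = 0 := by linarith [eq1.symm.trans eq2]
    exact this
  intro x
  obtain ⟨i, hi⟩ := Function.ne_iff.mp (hne x)
  have h := main i x
  rcases mul_eq_zero.mp h with h' | h'
  · rcases mul_eq_zero.mp h' with h'' | h''
    · norm_num at h''
    · exact h''
  · exact absurd h' hi

/-- `ξ` lies in the kernel of `(L₃)_q` iff the vector field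
`ξ̃ = -(ξ_x/2)γ + ξγ_x` equals `A·γ` for some constant `A ∈ sl(2,ℝ)`;
consequently the kernel of `(L₃)_q` is at most 3-dimensional (any four 2π-periodic
smooth functions in the kernel are linearly dependent). -/
theorem kernel_L3_sl2
    (γ : ℝ → Fin 2 → ℝ) (q : ℝ → ℝ) (ξ : ℝ → ℝ)
    (hγ : ContDiff ℝ (⊤ : ℕ∞) γ) (hq : ContDiff ℝ (⊤ : ℕ∞) q) (hξ : ContDiff ℝ (⊤ : ℕ∞) ξ)
    (hγper : ∀ x, γ (x + 2 * π) = γ x)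
    (hqper : ∀ x, q (x + 2 * π) = q x)
    (hξper : ∀ x, ξ (x + 2 * π) = ξ x)
    (hne : ∀ x, γ x ≠ 0)
    (hdet : ∀ x, det2 (γ x) (deriv γ x) = 1)
    (hcurv : ∀ x, deriv (deriv γ) x = q x • γ x) :
    ((∀ x, L3 q ξ x = 0) ↔
      ∃ A : Matrix (Fin 2) (Fin 2) ℝ, A.trace = 0 ∧
        ∀ x, (-(deriv ξ x) / 2) • γ x + ξ x • deriv γ x = A.mulVec (γ x))
    ∧ (∀ f : Fin 4 → ℝ → ℝ,
        (∀ i, ContDiff ℝ (⊤ : ℕ∞) (f i) ∧ (∀ x, f i (x + 2 * π) = f i x) ∧ ∀ x, L3 q (f i) x = 0)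
        → ¬ LinearIndependent ℝ f) := by
  constructor
  · constructor
    · exact fun hL => forward_dir γ q ξ hγ hq hξ hdet hcurv hL
    · rintro ⟨A, _, hA⟩
      exact backward_dir γ q ξ hγ hq hξ hne hcurv A hA
  · intro f hf hli
    choose A hTr hA using fun i =>
      forward_dir γ q (f i) hγ hq (hf i).1 hdet hcurv (hf i).2.2
    -- Φ sends a matrix to the function x ↦ det2 (γ x) (A * γ x)
    set Φ : Matrix (Fin 2) (Fin 2) ℝ →ₗ[ℝ] (ℝ → ℝ) :=
      { toFun := fun B => fun x => det2 (γ x) (B.mulVec (γ x))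
        map_add' := by
          intro B C
          funext x
          simp [det2, Matrix.add_mulVec]
          ring
        map_smul' := by
          intro r B
          funext x
          simp [det2, Matrix.smul_mulVec]
          ring } with hΦ
    have hfeq : ∀ i, f i = Φ (A i) := by
      intro i
      funext x
      have h := hA i x
      simp only [hΦ, LinearMap.coe_mk, AddHom.coe_mk]
      rw [← h]
      have hdx := hdet x
      simp only [det2] at hdx ⊢
      simp only [Pi.add_apply, Pi.smul_apply, smul_eq_mul]
      linear_combination (-(f i x)) * hdx
    set S := LinearMap.ker (Matrix.traceLinearMap (Fin 2) ℝ ℝ) with hS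
    have hmem : ∀ i, A i ∈ S := fun i => by
      simp only [hS, LinearMap.mem_ker, Matrix.traceLinearMap_apply]
      exact hTr i
    set g : Fin 4 → S := fun i => ⟨A i, hmem i⟩ with hg
    have hcomp : f = (Φ ∘ₗ S.subtype) ∘ g := by
      funext i
      simp only [hg, Function.comp_apply, LinearMap.coe_comp, Submodule.coe_subtype]
      exact hfeq i
    have hgli : LinearIndependent ℝ g := by
      apply LinearIndependent.of_comp (Φ ∘ₗ S.subtype)
      rw [← hcomp]
      exact hli
    have hcard : (4 : ℕ) ≤ Module.finrank ℝ S := by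
      simpa using hgli.fintype_card_le_finrank
    have hsurj : Function.Surjective (Matrix.traceLinearMap (Fin 2) ℝ ℝ) := by
      intro r
      refine ⟨Matrix.diagonal ![r, 0], ?_⟩
      simp [Matrix.traceLinearMap_apply, Matrix.trace_diagonal, Fin.sum_univ_two]
    have hrank := (Matrix.traceLinearMap (Fin 2) ℝ ℝ).finrank_range_add_finrank_ker
    rw [LinearMap.range_eq_top.mpr hsurj, finrank_top, Module.finrank_self] at hrank
    have hmat : Module.finrank ℝ (Matrix (Fin 2) (Fin 2) ℝ) = 4 := by
      rw [Module.finrank_matrix]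
      simp
    rw [hmat, ← hS] at hrank
    omega
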